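/- arXiv:2604.16710 — 4 statements merged into one kernel-verified Lean document; each statement's English description precedes it below -/
import Mathlib

section
/- Suppose A = W - D is Lyapunov diagonally stable. Then for every τ > 0 there exists exactly one x ∈ X with f_τ(x) = 0, where f_τ(x) = (1/τ)(-Dx + [Dx + τ(Ax + u)]_0^1), and this unique equilibrium is the same point for all τ > 0. -/
/-!
A zero of `f_τ` is, coordinatewise, a fixed point `yᵢ = [yᵢ + τ gᵢ]₀¹` of the saturation, where
`y = D x` and `g = A x + u`. This says `yᵢ ∈ [0, 1]` and `τ gᵢ (yᵢ - w) ≥ 0` for all `w ∈ [0, 1]`,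
a condition in which `τ` only enters as a positive factor, so all `f_τ` have the same zeros.

For two zeros `x, y` these variational inequalities give `(x - y)ᵢ (A (x - y))ᵢ ≥ 0` for every `i`,
hence `(x - y)ᵀ Λ A (x - y) ≥ 0`, which diagonal stability forbids unless `x = y`.

For existence, diagonal stability and compactness of the unit sphere make `-F` strongly monotone,
where `F x = Λ (A x + u)`: `⟪x - y, F x - F y⟫ ≤ -c ‖x - y‖²`. For small `ρ > 0` the projected step
`x ↦ P (x + ρ F x)`, with `P` the coordinatewise projection onto the box `X`, is then a contraction,
and its fixed point is a zero of every `f_τ`.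
-/

open Matrix

/-- Saturation nonlinearity `[z]₀¹ = max(0, min(z, 1))`. -/
noncomputable def sat (z : ℝ) : ℝ := max 0 (min z 1)

/-- The τ-LTN vector field `f_τ(x) = (1/τ)(-Dx + [Dx + τ(Ax + u)]₀¹)`. -/
noncomputable def fTau (n : ℕ) (d : Fin n → ℝ) (A : Matrix (Fin n) (Fin n) ℝ)
    (u : Fin n → ℝ) (τ : ℝ) (x : Fin n → ℝ) : Fin n → ℝ :=
  τ⁻¹ • (-(Matrix.diagonal d *ᵥ x)
    + fun i => sat ((Matrix.diagonal d *ᵥ x + τ • (A *ᵥ x + u)) i))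

open scoped RealInnerProductSpace NNReal

theorem sat_mem_Icc (z : ℝ) : sat z ∈ Set.Icc (0 : ℝ) 1 :=
  ⟨le_max_left _ _, max_le zero_le_one (min_le_right _ _)⟩

theorem lipschitzWith_sat : LipschitzWith 1 sat :=
  (LipschitzWith.id.min_const 1).const_max 0

theorem sat_add_eq_self_iff {y t : ℝ} :
    sat (y + t) = y ↔ y ∈ Set.Icc (0 : ℝ) 1 ∧ ∀ w ∈ Set.Icc (0 : ℝ) 1, 0 ≤ t * (y - w) := by
  constructor
  · intro h
    refine ⟨h ▸ sat_mem_Icc _, fun w ⟨hw0, hw1⟩ => ?_⟩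
    simp only [sat, max_def, min_def] at h
    split_ifs at h <;> nlinarith
  · rintro ⟨⟨hy0, hy1⟩, hvi⟩
    have h0 := hvi 0 (by norm_num)
    have h1 := hvi 1 (by norm_num)
    simp only [sat, max_def, min_def]
    split_ifs <;> nlinarith

theorem sat_add_mul_eq_self_iff {y s t : ℝ} (hs : 0 < s) :
    sat (y + s * t) = y ↔ sat (y + t) = y := by
  simp only [sat_add_eq_self_iff, mul_assoc, mul_nonneg_iff_of_pos_left hs]

section Contraction

variable {E : Type*} [NormedAddCommGroup E] [InnerProductSpace ℝ E]

theorem exists_forall_inner_le_neg_mul_norm_sq [FiniteDimensional ℝ E] (L : E →L[ℝ] E)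
    (hL : ∀ z ≠ 0, ⟪z, L z⟫ < 0) : ∃ c > 0, ∀ z, ⟪z, L z⟫ ≤ -c * ‖z‖ ^ 2 := by
  rcases subsingleton_or_nontrivial E with hE | hE
  · exact ⟨1, one_pos, fun z => by simp [Subsingleton.elim z 0]⟩
  obtain ⟨z₀, hz₀, hmax⟩ := (isCompact_sphere (0 : E) 1).exists_isMaxOn
    (NormedSpace.sphere_nonempty.2 zero_le_one)
    (by fun_prop : Continuous fun z => ⟪z, L z⟫).continuousOn
  have hz₀ne : z₀ ≠ 0 := ne_zero_of_mem_unit_sphere ⟨z₀, hz₀⟩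
  refine ⟨-⟪z₀, L z₀⟫, neg_pos.2 (hL z₀ hz₀ne), fun z => ?_⟩
  rcases eq_or_ne z 0 with rfl | hz
  · simp
  have hzn : ‖z‖ ≠ 0 := norm_ne_zero_iff.2 hz
  have hw : ‖z‖⁻¹ • z ∈ Metric.sphere (0 : E) 1 := by
    simp [norm_smul, hzn]
  calc ⟪z, L z⟫ = ‖z‖ ^ 2 * ⟪‖z‖⁻¹ • z, L (‖z‖⁻¹ • z)⟫ := by
        simp only [map_smul, inner_smul_left, inner_smul_right, conj_trivial]
        field_simp
    _ ≤ ‖z‖ ^ 2 * ⟪z₀, L z₀⟫ := mul_le_mul_of_nonneg_left (hmax hw) (sq_nonneg _)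
    _ = -(-⟪z₀, L z₀⟫) * ‖z‖ ^ 2 := by ring

theorem norm_add_smul_sub_add_smul_sq_le {F : E → E} {K : ℝ≥0} {c ρ : ℝ}
    (hF : LipschitzWith K F) (hmono : ∀ x y, ⟪x - y, F x - F y⟫ ≤ -c * ‖x - y‖ ^ 2)
    (hρ : 0 ≤ ρ) (hρK : ρ * K ^ 2 ≤ c) (x y : E) :
    ‖(x + ρ • F x) - (y + ρ • F y)‖ ^ 2 ≤ (1 - ρ * c) * ‖x - y‖ ^ 2 := by
  have hsplit : (x + ρ • F x) - (y + ρ • F y) = (x - y) + ρ • (F x - F y) := by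
    rw [smul_sub]; abel
  have hlip : ‖F x - F y‖ ^ 2 ≤ K ^ 2 * ‖x - y‖ ^ 2 := by
    rw [← mul_pow]
    exact pow_le_pow_left₀ (norm_nonneg _) (by simpa [dist_eq_norm] using hF.dist_le_mul x y) 2
  rw [hsplit, norm_add_sq_real, inner_smul_right, norm_smul, Real.norm_of_nonneg hρ, mul_pow]
  nlinarith [mul_le_mul_of_nonneg_left (hmono x y) hρ,
    mul_le_mul_of_nonneg_left hlip (sq_nonneg ρ),
    mul_le_mul_of_nonneg_right hρK (mul_nonneg hρ (sq_nonneg ‖x - y‖))]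

theorem exists_contractingWith_add_smul {F : E → E} {K : ℝ≥0} {c : ℝ} (hc : 0 < c)
    (hF : LipschitzWith K F) (hmono : ∀ x y, ⟪x - y, F x - F y⟫ ≤ -c * ‖x - y‖ ^ 2) :
    ∃ ρ : ℝ, 0 < ρ ∧ ∃ k, ContractingWith k fun x => x + ρ • F x := by
  set ρ := c / (K ^ 2 + c ^ 2)
  have hρ : 0 < ρ := by positivity
  have hρK : ρ * K ^ 2 ≤ c := by
    rw [div_mul_eq_mul_div, div_le_iff₀ (by positivity)]; nlinarith
  have hρc : ρ * c ≤ 1 := by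
    rw [div_mul_eq_mul_div, div_le_one (by positivity)]; nlinarith
  refine ⟨ρ, hρ, Real.toNNReal √(1 - ρ * c), ?_, LipschitzWith.of_dist_le' fun x y => ?_⟩
  · rw [Real.toNNReal_lt_one, Real.sqrt_lt' one_pos]
    nlinarith
  · rw [dist_eq_norm, dist_eq_norm, ← pow_le_pow_iff_left₀ (norm_nonneg _) (by positivity)
      two_ne_zero, mul_pow, Real.sq_sqrt (by linarith)]
    exact norm_add_smul_sub_add_smul_sq_le hF hmono hρ.le hρK x y

theorem exists_eq_comp_add_smul [CompleteSpace E] {P F : E → E} {K : ℝ≥0} {c : ℝ}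
    (hc : 0 < c) (hP : LipschitzWith 1 P) (hF : LipschitzWith K F)
    (hmono : ∀ x y, ⟪x - y, F x - F y⟫ ≤ -c * ‖x - y‖ ^ 2) :
    ∃ ρ : ℝ, 0 < ρ ∧ ∃ x, P (x + ρ • F x) = x := by
  obtain ⟨ρ, hρ, k, hk⟩ := exists_contractingWith_add_smul hc hF hmono
  have hT : ContractingWith k (P ∘ fun x => x + ρ • F x) := ⟨hk.1, by simpa using hP.comp hk.2⟩
  exact ⟨ρ, hρ, _, hT.fixedPoint_isFixedPt⟩

end Contraction

theorem lipschitzWith_one_euclideanSpace_map {ι : Type*} [Fintype ι] {f : ι → ℝ → ℝ}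
    (hf : ∀ i, LipschitzWith 1 (f i)) :
    LipschitzWith 1 fun x : EuclideanSpace ℝ ι => WithLp.toLp 2 fun i => f i (x i) := by
  refine LipschitzWith.of_dist_le_mul fun x y => ?_
  simp only [EuclideanSpace.dist_eq, NNReal.coe_one, one_mul]
  gcongr with i
  simpa using (hf i).dist_le_mul (x i) (y i)

theorem lipschitzWith_inv_mul_sat_mul {d : ℝ} (hd : 0 < d) :
    LipschitzWith 1 fun t => d⁻¹ * sat (d * t) := by
  refine LipschitzWith.of_dist_le_mul fun s t => ?_
  have := lipschitzWith_sat.dist_le_mul (d * s) (d * t)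
  simp only [Real.dist_eq, NNReal.coe_one, one_mul, ← mul_sub, abs_mul, abs_of_pos hd,
    abs_of_pos (inv_pos.2 hd)] at this ⊢
  rw [inv_mul_le_iff₀ hd]
  exact this

theorem sub_mul_sub_nonneg_of_sat_add_eq_self {a b s t : ℝ} (ha : sat (a + s) = a)
    (hb : sat (b + t) = b) : 0 ≤ (a - b) * (s - t) := by
  obtain ⟨haI, haVI⟩ := sat_add_eq_self_iff.1 ha
  obtain ⟨hbI, hbVI⟩ := sat_add_eq_self_iff.1 hb
  nlinarith [haVI b hbI, hbVI a haI]

theorem dotProduct_transpose_add_mulVec {ι R : Type*} [Fintype ι] [CommRing R]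
    (M : Matrix ι ι R) (z : ι → R) : z ⬝ᵥ (Mᵀ + M) *ᵥ z = 2 * (z ⬝ᵥ M *ᵥ z) := by
  rw [add_mulVec, dotProduct_add, dotProduct_mulVec, vecMul_transpose, dotProduct_comm, two_mul]

section LTN

variable {n : ℕ} {d : Fin n → ℝ} {A : Matrix (Fin n) (Fin n) ℝ} {u : Fin n → ℝ}

def IsLTNEquilibrium (d : Fin n → ℝ) (A : Matrix (Fin n) (Fin n) ℝ) (u x : Fin n → ℝ) : Prop :=
  ∀ i, sat (d i * x i + (A *ᵥ x + u) i) = d i * x i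

theorem fTau_eq_zero_iff {τ : ℝ} (hτ : 0 < τ) {x : Fin n → ℝ} :
    fTau n d A u τ x = 0 ↔ IsLTNEquilibrium d A u x := by
  simp only [IsLTNEquilibrium, fTau, smul_eq_zero, inv_eq_zero, hτ.ne', false_or, funext_iff,
    Pi.add_apply, Pi.smul_apply, mulVec_diagonal, smul_eq_mul, neg_add_eq_zero]
  exact forall_congr' fun i => (eq_comm.trans (sat_add_mul_eq_self_iff hτ))

theorem IsLTNEquilibrium.eq {x y : Fin n → ℝ} (hx : IsLTNEquilibrium d A u x)
    (hy : IsLTNEquilibrium d A u y) (hd : ∀ i, 0 < d i) {lam : Fin n → ℝ}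
    (hlam : ∀ i, 0 < lam i) (hneg : ∀ z ≠ 0, z ⬝ᵥ (diagonal lam * A) *ᵥ z < 0) : x = y := by
  by_contra hne
  refine (hneg (x - y) (sub_ne_zero.2 hne)).not_ge (Finset.sum_nonneg fun i _ => ?_)
  have hmono := sub_mul_sub_nonneg_of_sat_add_eq_self (hx i) (hy i)
  have hcoord : (A *ᵥ (x - y)) i = (A *ᵥ x + u) i - (A *ᵥ y + u) i := by
    simp [mulVec_sub]
  rw [← mul_sub, mul_assoc] at hmono
  rw [← mulVec_mulVec, mulVec_diagonal, hcoord, Pi.sub_apply, mul_left_comm]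
  exact mul_nonneg (hlam i).le (nonneg_of_mul_nonneg_right hmono (hd i))

theorem exists_isLTNEquilibrium (hd : ∀ i, 0 < d i) {lam : Fin n → ℝ}
    (hlam : ∀ i, 0 < lam i) (hneg : ∀ z ≠ 0, z ⬝ᵥ (diagonal lam * A) *ᵥ z < 0) :
    ∃ x, IsLTNEquilibrium d A u x := by
  set L := toEuclideanCLM (𝕜 := ℝ) (diagonal lam * A)
  obtain ⟨c, hc, hcoer⟩ := exists_forall_inner_le_neg_mul_norm_sq L fun z hz => by
    rw [inner_toEuclideanCLM]
    exact hneg _ (by simpa using hz)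
  set b : EuclideanSpace ℝ (Fin n) := WithLp.toLp 2 (diagonal lam *ᵥ u)
  have hmono : ∀ x y, ⟪x - y, (L x + b) - (L y + b)⟫ ≤ -c * ‖x - y‖ ^ 2 := by
    intro x y
    rw [add_sub_add_right_eq_sub, ← map_sub]
    exact hcoer _
  obtain ⟨ρ, hρ, x, hx⟩ := exists_eq_comp_add_smul hc
    (lipschitzWith_one_euclideanSpace_map fun i => lipschitzWith_inv_mul_sat_mul (hd i))
    (by simpa using L.lipschitz.add (LipschitzWith.const b)) hmono
  refine ⟨x, fun i => ?_⟩
  have hi := congrArg (· i) hx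
  simp only [PiLp.add_apply, PiLp.smul_apply, smul_eq_mul, mul_add] at hi
  rw [inv_mul_eq_iff_eq_mul₀ (hd i).ne'] at hi
  rw [← sat_add_mul_eq_self_iff (mul_pos (mul_pos (hd i) hρ) (hlam i))]
  convert hi using 3
  simp only [L, b, ofLp_toEuclideanCLM, ← mulVec_mulVec, mulVec_diagonal, Pi.add_apply]
  ring

end LTN

theorem tau_LTN_common_unique_equilibrium_general
    (n : ℕ)
    (d : Fin n → ℝ) (hd : ∀ i, 0 < d i)
    (u : Fin n → ℝ)
    (A : Matrix (Fin n) (Fin n) ℝ)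
    (hLDS : ∃ lam : Fin n → ℝ, (∀ i, 0 < lam i) ∧
      ∀ z : Fin n → ℝ, z ≠ 0 →
        z ⬝ᵥ ((Aᵀ * Matrix.diagonal lam + Matrix.diagonal lam * A) *ᵥ z) < 0) :
    ∃ xstar : Fin n → ℝ, (∀ i, d i * xstar i ∈ Set.Icc (0:ℝ) 1) ∧
      ∀ τ : ℝ, 0 < τ →
        fTau n d A u τ xstar = 0 ∧
        ∀ x : Fin n → ℝ, (∀ i, d i * x i ∈ Set.Icc (0:ℝ) 1) →
          fTau n d A u τ x = 0 → x = xstar := by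
  obtain ⟨lam, hlam, hLyap⟩ := hLDS
  have hneg : ∀ z ≠ 0, z ⬝ᵥ (diagonal lam * A) *ᵥ z < 0 := fun z hz => by
    have h := hLyap z hz
    rw [show Aᵀ * diagonal lam = (diagonal lam * A)ᵀ by rw [transpose_mul, diagonal_transpose],
      dotProduct_transpose_add_mulVec] at h
    linarith
  obtain ⟨xstar, hstar⟩ := exists_isLTNEquilibrium (u := u) hd hlam hneg
  refine ⟨xstar, fun i => (sat_add_eq_self_iff.1 (hstar i)).1, fun τ hτ =>
    ⟨(fTau_eq_zero_iff hτ).2 hstar, fun x _ hx => ?_⟩⟩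
  exact ((fTau_eq_zero_iff hτ).1 hx).eq hstar hd hlam hneg

/-- **Common unique equilibrium of the τ-LTN family under LDS.**
If `A = W - D` is Lyapunov diagonally stable, there is a point `x⋆ ∈ X` that
for every `τ > 0` is the unique zero of `f_τ` in `X`. -/
theorem tau_LTN_common_unique_equilibrium
    (n : ℕ) (hn : 1 ≤ n)
    (d : Fin n → ℝ) (hd : ∀ i, 0 < d i)
    (W : Matrix (Fin n) (Fin n) ℝ) (u : Fin n → ℝ)
    (A : Matrix (Fin n) (Fin n) ℝ) (hA : A = W - Matrix.diagonal d)
    (hLDS : ∃ lam : Fin n → ℝ, (∀ i, 0 < lam i) ∧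
      ∀ z : Fin n → ℝ, z ≠ 0 →
        z ⬝ᵥ ((Aᵀ * Matrix.diagonal lam + Matrix.diagonal lam * A) *ᵥ z) < 0) :
    ∃ xstar : Fin n → ℝ, (∀ i, d i * xstar i ∈ Set.Icc (0:ℝ) 1) ∧
      ∀ τ : ℝ, 0 < τ →
        fTau n d A u τ xstar = 0 ∧
        ∀ x : Fin n → ℝ, (∀ i, d i * x i ∈ Set.Icc (0:ℝ) 1) →
          fTau n d A u τ x = 0 → x = xstar :=
  tau_LTN_common_unique_equilibrium_general n d hd u A hLDS
end

section
/- For every x ∈ X, the τ-LTN vector field f_τ(x) = (1/τ)(-Dx + [Dx + τ(Ax + u)]_0^1) converges, as τ → 0⁺, to the vector P(x, Ax + u) whose i-th component equals max((Ax+u)_i, 0) if d_i x_i = 0, equals (Ax+u)_i if 0 < d_i x_i < 1, and equals min((Ax+u)_i, 0) if d_i x_i = 1. -/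
open Matrix Filter Topology
open scoped Classical

/-- Componentwise projection of `v` onto the tangent cone of `X` at `x`. -/
noncomputable def projX (n : ℕ) (d : Fin n → ℝ) (x v : Fin n → ℝ) : Fin n → ℝ :=
  fun i =>
    if d i * x i = 0 then max (v i) 0
    else if d i * x i = 1 then min (v i) 0
    else v i

/-! The clip `sat` is the identity on `[0, 1]`. For `s` in the open interval, `s + τ a` stays
inside for small `τ`, so `sat (s + τ a) - s = τ a`; at an endpoint only one side of the clip is
ever active, and positive homogeneity of `max`/`min` in `τ > 0` gives `τ · max a 0` or
`τ · min a 0`. So each component of `f_τ(x)` is eventually constant, equal to the projection. -/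

noncomputable def projTangentIcc (s a : ℝ) : ℝ :=
  if s = 0 then max a 0 else if s = 1 then min a 0 else a

theorem projX_apply (n : ℕ) (d x v : Fin n → ℝ) (i : Fin n) :
    projX n d x v i = projTangentIcc (d i * x i) (v i) := rfl

theorem fTau_apply (n : ℕ) (d : Fin n → ℝ) (A : Matrix (Fin n) (Fin n) ℝ) (u : Fin n → ℝ)
    (τ : ℝ) (x : Fin n → ℝ) (i : Fin n) :
    fTau n d A u τ x i = τ⁻¹ * (sat (d i * x i + τ * (A *ᵥ x + u) i) - d i * x i) := by
  simp only [fTau, mulVec_diagonal, Pi.smul_apply, Pi.add_apply, Pi.neg_apply, smul_eq_mul]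
  ring

theorem sat_of_mem_Icc {z : ℝ} (hz : z ∈ Set.Icc (0 : ℝ) 1) : sat z = z := by
  rw [sat, min_eq_left hz.2, max_eq_right hz.1]

theorem eventually_sat_add_mul {s : ℝ} (hs : s ∈ Set.Icc (0 : ℝ) 1) (a : ℝ) :
    ∀ᶠ τ in 𝓝[>] 0, sat (s + τ * a) = s + τ * projTangentIcc s a := by
  have hline : Tendsto (fun τ : ℝ => s + τ * a) (𝓝[>] 0) (𝓝 s) := by
    refine tendsto_nhdsWithin_of_tendsto_nhds ?_
    exact (continuous_const.add (continuous_id.mul continuous_const)).tendsto' _ _ (by simp)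
  have hpos : ∀ᶠ τ in 𝓝[>] (0 : ℝ), 0 < τ := self_mem_nhdsWithin
  unfold projTangentIcc
  split_ifs with h0 h1
  · subst h0
    filter_upwards [hpos, hline.eventually (eventually_lt_nhds zero_lt_one)] with τ hτ hle
    simp only [zero_add] at hle ⊢
    rw [sat, min_eq_left hle.le, mul_max_of_nonneg _ _ hτ.le, mul_zero, max_comm]
  · subst h1
    filter_upwards [hpos, hline.eventually (eventually_gt_nhds zero_lt_one)] with τ hτ hge
    rw [sat, max_eq_right (le_min hge.le zero_le_one), mul_min_of_nonneg _ _ hτ.le, mul_zero,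
      ← min_add_add_left, add_zero]
  · have hIoo : Set.Ioo (0 : ℝ) 1 ∈ 𝓝 s :=
      Ioo_mem_nhds (lt_of_le_of_ne hs.1 (Ne.symm h0)) (lt_of_le_of_ne hs.2 h1)
    filter_upwards [hline.eventually hIoo] with τ hτ
    exact sat_of_mem_Icc (Set.Ioo_subset_Icc_self hτ)

theorem tendsto_inv_mul_sat_add_mul_sub {s : ℝ} (hs : s ∈ Set.Icc (0 : ℝ) 1) (a : ℝ) :
    Tendsto (fun τ : ℝ => τ⁻¹ * (sat (s + τ * a) - s)) (𝓝[>] 0)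
      (𝓝 (projTangentIcc s a)) := by
  refine tendsto_const_nhds.congr' ?_
  filter_upwards [eventually_sat_add_mul hs a, self_mem_nhdsWithin] with τ hsat hτ
  rw [hsat, add_sub_cancel_left, inv_mul_cancel_left₀ (ne_of_gt hτ)]

theorem fast_limit_is_PDS_general
    (n : ℕ) (d : Fin n → ℝ) (u : Fin n → ℝ) (A : Matrix (Fin n) (Fin n) ℝ)
    (x : Fin n → ℝ) (hx : ∀ i, d i * x i ∈ Set.Icc (0:ℝ) 1) :
    Tendsto (fun τ : ℝ => fTau n d A u τ x) (𝓝[>] 0)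
      (𝓝 (projX n d x (A *ᵥ x + u))) := by
  refine tendsto_pi_nhds.2 fun i => ?_
  simp only [fTau_apply, projX_apply]
  exact tendsto_inv_mul_sat_add_mul_sub (hx i) _

/-- **Fast limit of the τ-LTN family is the projected dynamical system.**
For every `x ∈ X`, `f_τ(x) → Π_X(x, Ax + u)` as `τ → 0⁺`. -/
theorem fast_limit_is_PDS
    (n : ℕ) (hn : 1 ≤ n)
    (d : Fin n → ℝ) (hd : ∀ i, 0 < d i)
    (W : Matrix (Fin n) (Fin n) ℝ) (u : Fin n → ℝ)
    (A : Matrix (Fin n) (Fin n) ℝ) (hA : A = W - Matrix.diagonal d)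
    (x : Fin n → ℝ) (hx : ∀ i, d i * x i ∈ Set.Icc (0:ℝ) 1) :
    Tendsto (fun τ : ℝ => fTau n d A u τ x) (𝓝[>] 0)
      (𝓝 (projX n d x (A *ᵥ x + u))) :=
  fast_limit_is_PDS_general n d u A x hx
end

section
/- A point x ∈ X satisfies P(x, Ax + u) = 0 (i.e., x is an equilibrium of the projected dynamical system ẋ = Π_X(x, Ax+u)) if and only if -Dx + [Wx + u]_0^1 = 0 (i.e., x is an equilibrium of the linear-threshold network). -/
open Matrix
open scoped Classical

/-!
Coordinate `i` of `Ax + u` is `(Wx + u)ᵢ - sᵢ` with `sᵢ = dᵢxᵢ ∈ [0, 1]`, so both equilibrium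
conditions decouple into the scalar statement: the tangent-cone projection of `y - s` at `s`
vanishes iff `[y]₀¹ = s`. On the boundary `s = 0` (resp. `s = 1`) both sides say `y ≤ 0`
(resp. `1 ≤ y`); in the interior both say `y = s`.
-/

lemma sat_eq_zero_iff {y : ℝ} : sat y = 0 ↔ y ≤ 0 := by
  unfold sat
  constructor
  · intro h
    by_contra! hy
    have : 0 < min y 1 := lt_min hy one_pos
    linarith [le_max_right 0 (min y 1)]
  · intro hy
    exact max_eq_left ((min_le_left y 1).trans hy)

lemma sat_eq_one_iff {y : ℝ} : sat y = 1 ↔ 1 ≤ y := by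
  unfold sat
  constructor
  · intro h
    by_contra! hy
    have : max 0 (min y 1) < 1 := max_lt one_pos ((min_le_left y 1).trans_lt hy)
    linarith
  · intro hy
    rw [min_eq_right hy, max_eq_right zero_le_one]

lemma sat_eq_iff_of_mem_Ioo {y s : ℝ} (hs : s ∈ Set.Ioo 0 1) : sat y = s ↔ y = s := by
  obtain ⟨hs0, hs1⟩ := hs
  unfold sat
  constructor
  · intro h
    rcases le_or_gt y 0 with hy0 | hy0
    · rw [max_eq_left ((min_le_left y 1).trans hy0)] at h; linarith
    rcases le_or_gt 1 y with hy1 | hy1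
    · rw [min_eq_right hy1, max_eq_right zero_le_one] at h; linarith
    · rwa [min_eq_left hy1.le, max_eq_right hy0.le] at h
  · rintro rfl
    rw [min_eq_left hs1.le, max_eq_right hs0.le]

lemma tangentConeProj_sub_eq_zero_iff_sat_eq {s y : ℝ} (hs : s ∈ Set.Icc 0 1) :
    (if s = 0 then max (y - s) 0 else if s = 1 then min (y - s) 0 else y - s) = 0 ↔
      sat y = s := by
  split_ifs with hs0 hs1
  · subst hs0
    rw [sub_zero, max_eq_right_iff, sat_eq_zero_iff]
  · subst hs1
    rw [min_eq_right_iff, sat_eq_one_iff, sub_nonneg]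
  · rw [sub_eq_zero, sat_eq_iff_of_mem_Ioo
      ⟨lt_of_le_of_ne hs.1 (Ne.symm hs0), lt_of_le_of_ne hs.2 hs1⟩]

theorem PDS_LTN_same_equilibria_general
    (n : ℕ)
    (d : Fin n → ℝ)
    (W : Matrix (Fin n) (Fin n) ℝ) (u : Fin n → ℝ)
    (A : Matrix (Fin n) (Fin n) ℝ) (hA : A = W - Matrix.diagonal d)
    (x : Fin n → ℝ) (hx : ∀ i, d i * x i ∈ Set.Icc (0:ℝ) 1) :
    projX n d x (A *ᵥ x + u) = 0 ↔
      -(Matrix.diagonal d *ᵥ x) + (fun i => sat ((W *ᵥ x + u) i)) = 0 := by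
  subst hA
  simp only [funext_iff, Pi.zero_apply, Pi.add_apply, mulVec_diagonal, neg_add_eq_zero]
  refine forall_congr' fun i => ?_
  have hcoord : ((W - diagonal d) *ᵥ x + u) i = (W *ᵥ x + u) i - d i * x i := by
    simp only [sub_mulVec, mulVec_diagonal, Pi.add_apply, Pi.sub_apply]
    ring
  rw [projX, hcoord]
  exact (tangentConeProj_sub_eq_zero_iff_sat_eq (hx i)).trans eq_comm

/-- **The PDS and the LTN share equilibria.** For `x ∈ X`,
`Π_X(x, Ax + u) = 0` iff `-Dx + [Wx + u]₀¹ = 0`. -/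
theorem PDS_LTN_same_equilibria
    (n : ℕ) (hn : 1 ≤ n)
    (d : Fin n → ℝ) (hd : ∀ i, 0 < d i)
    (W : Matrix (Fin n) (Fin n) ℝ) (u : Fin n → ℝ)
    (A : Matrix (Fin n) (Fin n) ℝ) (hA : A = W - Matrix.diagonal d)
    (x : Fin n → ℝ) (hx : ∀ i, d i * x i ∈ Set.Icc (0:ℝ) 1) :
    projX n d x (A *ᵥ x + u) = 0 ↔
      -(Matrix.diagonal d *ᵥ x) + (fun i => sat ((W *ᵥ x + u) i)) = 0 :=
  PDS_LTN_same_equilibria_general n d W u A hA x hx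
end

section
/- Let Λ = diag(λ_1,…,λ_n) be a positive diagonal matrix and define V_∞(x) = max over ζ ∈ {0,1}^n of (Ax + u)^T Λ (ζ - Dx). Then for x ∈ X, V_∞(x) = 0 if and only if for each i: (Ax+u)_i ≤ 0 whenever d_i x_i = 0, (Ax+u)_i = 0 whenever 0 < d_i x_i < 1, and (Ax+u)_i ≥ 0 whenever d_i x_i = 1 (i.e., x is an equilibrium of the linear-threshold network). In particular, if A is Lyapunov diagonally stable with certificate Λ, then V_∞(x) = 0 if and only if x equals the unique equilibrium x*. -/
open Matrix
open scoped Classical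

/-- The slow-limit Lyapunov function
`V_∞(x) = max_{ζ ∈ {0,1}ⁿ} (Ax + u)ᵀ Λ (ζ - Dx)`. -/
noncomputable def Vinf (n : ℕ) (lam d : Fin n → ℝ) (A : Matrix (Fin n) (Fin n) ℝ)
    (u : Fin n → ℝ) (x : Fin n → ℝ) : ℝ :=
  ⨆ ζ : Fin n → Bool,
    ∑ i, (A *ᵥ x + u) i * lam i * ((if ζ i then (1:ℝ) else 0) - d i * x i)

/-!
`V_∞` decouples over the coordinates: the maximum over `ζ ∈ {0,1}ⁿ` of a separable sum is the sum
of the coordinatewise maxima, and with `y = (Ax + u)_i`, `s = d_i x_i ∈ [0,1]` the `i`-th maximum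
`λ_i · max (y (1 - s)) (-y s)` is nonnegative and vanishes exactly when `y` lies in the normal cone
of `[0,1]` at `s`. Since the normal cone operator is monotone, two equilibria `x, x'` satisfy
`(x_i - x'_i)((Ax + u)_i - (Ax' + u)_i) ≥ 0` for every `i`; weighting by `λ_i` and summing gives
`zᵀ(AᵀΛ + ΛA)z ≥ 0` for `z = x - x'`, so Lyapunov diagonal stability forces `x = x'`.
-/

theorem ciSup_pi_sum {ι β M : Type*} [Fintype ι] [Finite β] [Nonempty β]
    [ConditionallyCompleteLinearOrder M] [AddCommMonoid M] [IsOrderedAddMonoid M]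
    (c : ι → β → M) :
    ⨆ ζ : ι → β, ∑ i, c i (ζ i) = ∑ i, ⨆ b, c i b := by
  choose ζ hζ using fun i => exists_eq_ciSup_of_finite (f := c i)
  refine le_antisymm (ciSup_le fun ζ' => Finset.sum_le_sum fun i _ => ?_) ?_
  · exact le_ciSup (Set.finite_range _).bddAbove _
  · calc ∑ i, ⨆ b, c i b = ∑ i, c i (ζ i) := by simp only [hζ]
      _ ≤ ⨆ ζ : ι → β, ∑ i, c i (ζ i) :=
        le_ciSup (f := fun ζ : ι → β => ∑ i, c i (ζ i)) (Set.finite_range _).bddAbove ζ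

theorem ciSup_bool_eq {M : Type*} [ConditionallyCompleteLinearOrder M] (f : Bool → M) :
    ⨆ b, f b = max (f true) (f false) :=
  le_antisymm (ciSup_le fun b => by cases b <;> simp)
    (max_le (le_ciSup (Set.finite_range f).bddAbove true)
      (le_ciSup (Set.finite_range f).bddAbove false))

/-- `y` lies in the normal cone of `[0,1]` at `s`. For `x ∈ X`, the equilibrium conditions of the
linear-threshold network say exactly that `(Ax + u)_i` lies in the normal cone at `d_i x_i`. -/
def IsUnitIntervalNormal (s y : ℝ) : Prop :=
  (s = 0 → y ≤ 0) ∧ (0 < s → s < 1 → y = 0) ∧ (s = 1 → 0 ≤ y)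

section UnitIntervalNormal

variable {s y : ℝ}

theorem isUnitIntervalNormal_iff (hs : s ∈ Set.Icc (0 : ℝ) 1) :
    IsUnitIntervalNormal s y ↔ (0 < s → 0 ≤ y) ∧ (s < 1 → y ≤ 0) := by
  constructor
  · rintro ⟨h₀, hmid, h₁⟩
    refine ⟨fun hpos => ?_, fun hlt => ?_⟩
    · rcases hs.2.lt_or_eq with hlt | rfl
      exacts [(hmid hpos hlt).ge, h₁ rfl]
    · rcases hs.1.lt_or_eq with hpos | rfl
      exacts [(hmid hpos hlt).le, h₀ rfl]
  · rintro ⟨hpos, hlt⟩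
    refine ⟨fun h => hlt (by linarith), fun h h' => le_antisymm (hlt h') (hpos h), fun h => hpos ?_⟩
    linarith

theorem IsUnitIntervalNormal.mul_sub_nonneg {s' y' : ℝ} (hs : s ∈ Set.Icc (0 : ℝ) 1)
    (hs' : s' ∈ Set.Icc (0 : ℝ) 1) (h : IsUnitIntervalNormal s y)
    (h' : IsUnitIntervalNormal s' y') : 0 ≤ (s - s') * (y - y') := by
  obtain ⟨hpos, hlt⟩ := (isUnitIntervalNormal_iff hs).1 h
  obtain ⟨hpos', hlt'⟩ := (isUnitIntervalNormal_iff hs').1 h'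
  rcases lt_trichotomy s s' with hss | rfl | hss
  · have : y - y' ≤ 0 := by linarith [hlt (hss.trans_le hs'.2), hpos' (hs.1.trans_lt hss)]
    nlinarith
  · simp
  · have : 0 ≤ y - y' := by linarith [hpos (hs'.1.trans_lt hss), hlt' (hss.trans_le hs.2)]
    nlinarith

variable {l : ℝ}

theorem max_mul_sub_nonneg (hl : 0 < l) (hs : s ∈ Set.Icc (0 : ℝ) 1) :
    0 ≤ max (y * l * (1 - s)) (y * l * (0 - s)) := by
  rcases le_total 0 y with hy | hy
  · exact le_max_of_le_left (mul_nonneg (mul_nonneg hy hl.le) (by linarith [hs.2]))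
  · exact le_max_of_le_right (by nlinarith [mul_nonpos_of_nonpos_of_nonneg hy hl.le, hs.1])

theorem max_mul_sub_eq_zero_iff (hl : 0 < l) (hs : s ∈ Set.Icc (0 : ℝ) 1) :
    max (y * l * (1 - s)) (y * l * (0 - s)) = 0 ↔ IsUnitIntervalNormal s y := by
  rw [isUnitIntervalNormal_iff hs, le_antisymm_iff, and_iff_left (max_mul_sub_nonneg hl hs),
    max_le_iff]
  refine and_comm.trans (and_congr ⟨fun h hpos => ?_, fun h => ?_⟩ ⟨fun h hlt => ?_, fun h => ?_⟩)
  · nlinarith [mul_pos hl hpos]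
  · rcases hs.1.lt_or_eq with hpos | rfl
    · nlinarith [mul_nonneg (mul_nonneg (h hpos) hl.le) hpos.le]
    · simp
  · nlinarith [mul_pos hl (sub_pos.2 hlt)]
  · rcases hs.2.lt_or_eq with hlt | rfl
    · nlinarith [h hlt, mul_pos hl (sub_pos.2 hlt)]
    · simp

end UnitIntervalNormal

theorem Vinf_eq_sum_max (n : ℕ) (lam d : Fin n → ℝ) (A : Matrix (Fin n) (Fin n) ℝ)
    (u x : Fin n → ℝ) :
    Vinf n lam d A u x =
      ∑ i, max ((A *ᵥ x + u) i * lam i * (1 - d i * x i))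
        ((A *ᵥ x + u) i * lam i * (0 - d i * x i)) := by
  rw [Vinf, ciSup_pi_sum (fun i (b : Bool) =>
    (A *ᵥ x + u) i * lam i * ((if b then (1:ℝ) else 0) - d i * x i))]
  simp only [ciSup_bool_eq, if_true, Bool.false_eq_true, if_false]

theorem Vinf_eq_zero_iff {n : ℕ} {lam d : Fin n → ℝ} (hlam : ∀ i, 0 < lam i)
    (A : Matrix (Fin n) (Fin n) ℝ) (u : Fin n → ℝ) {x : Fin n → ℝ}
    (hx : ∀ i, d i * x i ∈ Set.Icc (0:ℝ) 1) :
    Vinf n lam d A u x = 0 ↔ ∀ i, IsUnitIntervalNormal (d i * x i) ((A *ᵥ x + u) i) := by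
  rw [Vinf_eq_sum_max, Finset.sum_eq_zero_iff_of_nonneg fun i _ =>
    max_mul_sub_nonneg (hlam i) (hx i)]
  simp only [Finset.mem_univ, true_implies, max_mul_sub_eq_zero_iff (hlam _) (hx _)]

theorem dotProduct_lyapunov_mulVec {ι R : Type*} [Fintype ι] [DecidableEq ι] [CommRing R]
    (lam : ι → R) (A : Matrix ι ι R) (z : ι → R) :
    z ⬝ᵥ ((Aᵀ * diagonal lam + diagonal lam * A) *ᵥ z) = 2 * ∑ i, lam i * z i * (A *ᵥ z) i := by
  rw [add_mulVec, dotProduct_add, ← mulVec_mulVec, ← mulVec_mulVec, dotProduct_mulVec z Aᵀ,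
    vecMul_transpose]
  simp only [dotProduct, mulVec_diagonal, ← Finset.sum_add_distrib, Finset.mul_sum]
  exact Finset.sum_congr rfl fun i _ => by ring

theorem eq_of_isUnitIntervalNormal {n : ℕ} {d lam : Fin n → ℝ} (hd : ∀ i, 0 < d i)
    (hlam : ∀ i, 0 < lam i) {A : Matrix (Fin n) (Fin n) ℝ} (u : Fin n → ℝ)
    (hA : ∀ z : Fin n → ℝ, z ≠ 0 →
      z ⬝ᵥ ((Aᵀ * diagonal lam + diagonal lam * A) *ᵥ z) < 0)
    {x x' : Fin n → ℝ} (hx : ∀ i, d i * x i ∈ Set.Icc (0:ℝ) 1)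
    (hx' : ∀ i, d i * x' i ∈ Set.Icc (0:ℝ) 1)
    (h : ∀ i, IsUnitIntervalNormal (d i * x i) ((A *ᵥ x + u) i))
    (h' : ∀ i, IsUnitIntervalNormal (d i * x' i) ((A *ᵥ x' + u) i)) :
    x = x' := by
  by_contra hne
  have hterm : ∀ i, 0 ≤ lam i * (x - x') i * (A *ᵥ (x - x')) i := fun i => by
    have hmono := (h i).mul_sub_nonneg (hx i) (hx' i) (h' i)
    have hAz : (A *ᵥ (x - x')) i = (A *ᵥ x + u) i - (A *ᵥ x' + u) i := by
      simp [mulVec_sub]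
    rw [hAz, Pi.sub_apply, mul_assoc]
    refine mul_nonneg (hlam i).le (nonneg_of_mul_nonneg_right ?_ (hd i))
    linarith
  have := hA (x - x') (sub_ne_zero.2 hne)
  rw [dotProduct_lyapunov_mulVec] at this
  linarith [Finset.sum_nonneg fun i (_ : i ∈ Finset.univ) => hterm i]

theorem Vinf_positive_definite_general
    (n : ℕ)
    (d : Fin n → ℝ) (hd : ∀ i, 0 < d i)
    (u : Fin n → ℝ)
    (A : Matrix (Fin n) (Fin n) ℝ)
    (lam : Fin n → ℝ) (hlam : ∀ i, 0 < lam i) :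
    (∀ x : Fin n → ℝ, (∀ i, d i * x i ∈ Set.Icc (0:ℝ) 1) →
      (Vinf n lam d A u x = 0 ↔
        ∀ i, (d i * x i = 0 → (A *ᵥ x + u) i ≤ 0)
          ∧ (0 < d i * x i → d i * x i < 1 → (A *ᵥ x + u) i = 0)
          ∧ (d i * x i = 1 → 0 ≤ (A *ᵥ x + u) i)))
    ∧ ((∀ z : Fin n → ℝ, z ≠ 0 →
          z ⬝ᵥ ((Aᵀ * Matrix.diagonal lam + Matrix.diagonal lam * A) *ᵥ z) < 0) →
        ∀ xs : Fin n → ℝ, (∀ i, d i * xs i ∈ Set.Icc (0:ℝ) 1) →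
          (∀ i, (d i * xs i = 0 → (A *ᵥ xs + u) i ≤ 0)
            ∧ (0 < d i * xs i → d i * xs i < 1 → (A *ᵥ xs + u) i = 0)
            ∧ (d i * xs i = 1 → 0 ≤ (A *ᵥ xs + u) i)) →
          ∀ x : Fin n → ℝ, (∀ i, d i * x i ∈ Set.Icc (0:ℝ) 1) →
            (Vinf n lam d A u x = 0 ↔ x = xs)) := by
  refine ⟨fun x hx => Vinf_eq_zero_iff hlam A u hx, fun hA xs hxs hxs_eq x hx => ?_⟩
  rw [Vinf_eq_zero_iff hlam A u hx]
  exact ⟨fun hx_eq => eq_of_isUnitIntervalNormal hd hlam u hA hx hxs hx_eq hxs_eq,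
    fun hx_xs => hx_xs ▸ hxs_eq⟩

/-- **Positive definiteness of the slow-limit Lyapunov function.** For `x ∈ X`,
`V_∞(x) = 0` iff `x` satisfies the LTN equilibrium conditions. In particular,
if `A` is Lyapunov diagonally stable with certificate Λ and `x*` is the unique
equilibrium, then `V_∞(x) = 0 ↔ x = x*` on `X`. -/
theorem Vinf_positive_definite
    (n : ℕ) (hn : 1 ≤ n)
    (d : Fin n → ℝ) (hd : ∀ i, 0 < d i)
    (W : Matrix (Fin n) (Fin n) ℝ) (u : Fin n → ℝ)
    (A : Matrix (Fin n) (Fin n) ℝ) (hA : A = W - Matrix.diagonal d)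
    (lam : Fin n → ℝ) (hlam : ∀ i, 0 < lam i) :
    (∀ x : Fin n → ℝ, (∀ i, d i * x i ∈ Set.Icc (0:ℝ) 1) →
      (Vinf n lam d A u x = 0 ↔
        ∀ i, (d i * x i = 0 → (A *ᵥ x + u) i ≤ 0)
          ∧ (0 < d i * x i → d i * x i < 1 → (A *ᵥ x + u) i = 0)
          ∧ (d i * x i = 1 → 0 ≤ (A *ᵥ x + u) i)))
    ∧ ((∀ z : Fin n → ℝ, z ≠ 0 →
          z ⬝ᵥ ((Aᵀ * Matrix.diagonal lam + Matrix.diagonal lam * A) *ᵥ z) < 0) →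
        ∀ xs : Fin n → ℝ, (∀ i, d i * xs i ∈ Set.Icc (0:ℝ) 1) →
          (∀ i, (d i * xs i = 0 → (A *ᵥ xs + u) i ≤ 0)
            ∧ (0 < d i * xs i → d i * xs i < 1 → (A *ᵥ xs + u) i = 0)
            ∧ (d i * xs i = 1 → 0 ≤ (A *ᵥ xs + u) i)) →
          ∀ x : Fin n → ℝ, (∀ i, d i * x i ∈ Set.Icc (0:ℝ) 1) →
            (Vinf n lam d A u x = 0 ↔ x = xs)) :=
  Vinf_positive_definite_general n d hd u A lam hlam
end
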